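/- For a forest T_v rooted at a hypernode v with S(v) nonempty, the variance of the SEI estimate satisfies: Var(|v|·C_SEI(T_v)) = Σ_{w ∈ H(v)} [ 1 / C(|S(v)|−1, |w|−1) ] · [ r(S(v)) / r(w) ] · ( Var(|w|·C_SEI(T_w)) + Cost(T_w)² ) − Cost(T_{S(v)})². (Paper's Theorem 4.) -/

import Mathlib

/-!
Conditioned on the first draw `w ∈ H(v)`, the rescaled estimate is
`|v|·C_SEI(T_v) = c(v) + (r(S(v))/r(w))·|w|·C_SEI(T_w)`, and
`P(w)·r(S(v))/r(w) = 1/C(|S(v)|-1, |w|-1)`.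
Every node of `S(v)` lies in exactly `C(|S(v)|-1, |w|-1)` members of `H(v)`, so summing
`Cost(T_w)/C(|S(v)|-1, |w|-1)` over `H(v)` gives `Cost(T_{S(v)})`; by induction this makes the
estimator unbiased, `E[|v|·C_SEI(T_v)] = Cost(T_v)`. Expanding the square of the conditional
estimate and subtracting `(c(v) + Cost(T_{S(v)}))²` leaves the formula.
-/

open Finset

/-- A finite rooted tree on a finite node type `V`.  The root is its own parent,
every non-root node has a parent whose depth is one smaller, and the root is the
unique node of depth `0`. -/
structure FinRootedTree (V : Type) [Fintype V] [DecidableEq V] where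
  root : V
  parent : V → V
  depth : V → ℕ
  depth_root : depth root = 0
  parent_root : parent root = root
  depth_parent : ∀ v, v ≠ root → depth (parent v) + 1 = depth v
  eq_root_of_depth_zero : ∀ v, depth v = 0 → v = root

namespace FinRootedTree

variable {V : Type} [Fintype V] [DecidableEq V]

/-- The set of children of a node. -/
def children (T : FinRootedTree V) (x : V) : Finset V :=
  Finset.univ.filter fun w => w ≠ T.root ∧ T.parent w = x

/-- `S(v)`: the set of all children of nodes of a hypernode `v`. -/
def succs (T : FinRootedTree V) (v : Finset V) : Finset V :=
  v.biUnion T.children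

/-- The set of nodes of the subtree rooted at `x` (the descendants of `x`,
including `x` itself). -/
def desc (T : FinRootedTree V) (x : V) : Finset V :=
  Finset.univ.filter fun w =>
    x ∈ (Finset.range (T.depth w + 1)).image fun k => T.parent^[k] w

/-- `Cost(T_x)`: the total cost of the subtree rooted at `x`. -/
noncomputable def subtreeCost (T : FinRootedTree V) (c : V → ℝ) (x : V) : ℝ :=
  ∑ w ∈ T.desc x, c w

/-- `Cost(T_v)`: the total cost of the forest rooted at the hypernode `v`. -/
noncomputable def forestCost (T : FinRootedTree V) (c : V → ℝ) (v : Finset V) : ℝ :=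
  ∑ x ∈ v, T.subtreeCost c x

/-- `H(v)`: the hyperchildren of `v` for budget `B`, i.e. the subsets of `S(v)`
of size `min B |S(v)|`. -/
def hyper (T : FinRootedTree V) (B : ℕ) (v : Finset V) : Finset (Finset V) :=
  (T.succs v).powersetCard (min B (T.succs v).card)

/-- A hypernode: a nonempty set of distinct nodes, all at the same depth. -/
def IsHypernode (T : FinRootedTree V) (v : Finset V) : Prop :=
  v.Nonempty ∧ ∀ a ∈ v, ∀ b ∈ v, T.depth a = T.depth b

/-- Expectation functional of the SEI estimator `C_SEI(T_v)` (with importance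
function `r`): `seiE T c B r fuel v g` is `E[g(C_SEI(T_v))]`, defined by the
recursion of Algorithm 2, where the hypernode `w` is drawn from `H(v)` with
probability `r(w) / (r(S(v)) * C(|S(v)|-1, |w|-1))`, with enough fuel to reach
the leaves. -/
noncomputable def seiE (T : FinRootedTree V) (c : V → ℝ) (B : ℕ)
    (r : V → ℝ) : ℕ → Finset V → (ℝ → ℝ) → ℝ
  | 0, v, g => g ((∑ x ∈ v, c x) / (v.card : ℝ))
  | fuel + 1, v, g =>
      if T.succs v = ∅ then g ((∑ x ∈ v, c x) / (v.card : ℝ))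
      else
        ∑ w ∈ T.hyper B v,
          ((∑ a ∈ w, r a) /
              ((∑ a ∈ T.succs v, r a) *
                ((((T.succs v).card - 1).choose (w.card - 1) : ℕ) : ℝ))) *
            seiE T c B r fuel w fun y =>
              g ((∑ x ∈ v, c x) / (v.card : ℝ) +
                ((w.card : ℝ) / (v.card : ℝ)) *
                  ((∑ a ∈ T.succs v, r a) / (∑ a ∈ w, r a)) * y)

/-- `Var(|v| * C_SEI(T_v))`. -/
noncomputable def seiVar (T : FinRootedTree V) (c : V → ℝ) (B : ℕ) (r : V → ℝ)
    (fuel : ℕ) (v : Finset V) : ℝ :=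
  seiE T c B r fuel v (fun y => ((v.card : ℝ) * y) ^ 2) -
    (seiE T c B r fuel v fun y => (v.card : ℝ) * y) ^ 2

end FinRootedTree

namespace Finset

variable {α M : Type*} [DecidableEq α]

theorem card_filter_mem_powersetCard {s : Finset α} {a : α} (ha : a ∈ s) {k : ℕ} (hk : 1 ≤ k) :
    #{w ∈ s.powersetCard k | a ∈ w} = (#s - 1).choose (k - 1) := by
  simpa using
    card_filter_powersetCard_subset {a} s k (singleton_subset_iff.2 ha) (by simpa using hk)

/-- Every element of `s` lies in `(#s - 1).choose (k - 1)` of its `k`-subsets. -/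
theorem sum_powersetCard_sum [AddCommMonoid M] (s : Finset α) {k : ℕ} (hk : 1 ≤ k) (f : α → M) :
    ∑ w ∈ s.powersetCard k, ∑ a ∈ w, f a = (#s - 1).choose (k - 1) • ∑ a ∈ s, f a := by
  rw [sum_comm' (s' := fun a => {w ∈ s.powersetCard k | a ∈ w}) (t' := s), smul_sum]
  · exact sum_congr rfl fun a ha => by rw [sum_const, card_filter_mem_powersetCard ha hk]
  · intro w a
    simp only [mem_powersetCard, mem_filter]
    exact ⟨fun ⟨⟨hws, hk⟩, ha⟩ => ⟨⟨⟨hws, hk⟩, ha⟩, hws ha⟩, fun h => ⟨h.1.1, h.1.2⟩⟩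

end Finset

namespace FinRootedTree

variable {V : Type} [Fintype V] [DecidableEq V]

section

variable (T : FinRootedTree V)

theorem depth_iterate_parent_add (x : V) {k : ℕ} (hk : k ≤ T.depth x) :
    T.depth (T.parent^[k] x) + k = T.depth x := by
  induction k with
  | zero => rfl
  | succ k ih =>
    have hk' := ih (by omega)
    have hne : T.parent^[k] x ≠ T.root := fun h => by
      rw [h, T.depth_root] at hk'
      omega
    rw [Function.iterate_succ_apply', ← hk', ← T.depth_parent _ hne]
    omega

theorem depth_lt_card (x : V) : T.depth x < Fintype.card V := by
  have hinj : Set.InjOn (fun k => T.parent^[k] x) (range (T.depth x + 1)) := by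
    intro a ha b hb hab
    simp only [coe_range, Set.mem_Iio] at ha hb
    have ha' := T.depth_iterate_parent_add x (k := a) (by omega)
    have hb' := T.depth_iterate_parent_add x (k := b) (by omega)
    simp only at hab
    rw [hab] at ha'
    omega
  simpa using card_le_card_of_injOn _ (fun k _ => mem_univ _) hinj

theorem eq_empty_of_forall_card_le_depth {v : Finset V}
    (hv : ∀ x ∈ v, Fintype.card V ≤ T.depth x) : v = ∅ :=
  eq_empty_of_forall_notMem fun x hx => (hv x hx).not_gt (T.depth_lt_card x)

theorem mem_children {x w : V} : w ∈ T.children x ↔ w ≠ T.root ∧ T.parent w = x := by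
  simp [children]

theorem depth_of_mem_children {x w : V} (h : w ∈ T.children x) :
    T.depth w = T.depth x + 1 := by
  obtain ⟨hw, rfl⟩ := T.mem_children.1 h
  exact (T.depth_parent w hw).symm

theorem exists_depth_eq_of_mem_succs {v : Finset V} {w : V} (h : w ∈ T.succs v) :
    ∃ x ∈ v, T.depth w = T.depth x + 1 := by
  obtain ⟨x, hx, hw⟩ := mem_biUnion.1 h
  exact ⟨x, hx, T.depth_of_mem_children hw⟩

theorem mem_desc {x w : V} : w ∈ T.desc x ↔ ∃ k ≤ T.depth w, T.parent^[k] w = x := by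
  simp only [desc, mem_filter, mem_univ, true_and, mem_image, mem_range, Nat.lt_succ_iff]

theorem depth_le_of_mem_desc {x w : V} (h : w ∈ T.desc x) : T.depth x ≤ T.depth w := by
  obtain ⟨k, hk, rfl⟩ := T.mem_desc.1 h
  have := T.depth_iterate_parent_add w hk
  omega

theorem desc_eq_insert_biUnion (x : V) :
    T.desc x = insert x ((T.children x).biUnion T.desc) := by
  ext w
  simp only [mem_insert, mem_biUnion, T.mem_desc, T.mem_children]
  constructor
  · rintro ⟨_ | k, hk, hw⟩
    · exact .inl hw
    · have hk' := T.depth_iterate_parent_add w (k := k) (by omega)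
      refine .inr ⟨T.parent^[k] w, ⟨fun h => ?_, ?_⟩, k, by omega, rfl⟩
      · rw [h, T.depth_root] at hk'
        omega
      · rwa [← Function.iterate_succ_apply' T.parent k w]
  · rintro (rfl | ⟨y, ⟨hy, rfl⟩, k, hk, rfl⟩)
    · exact ⟨0, Nat.zero_le _, rfl⟩
    · have := T.depth_iterate_parent_add w hk
      have := T.depth_parent _ hy
      exact ⟨k + 1, by omega, Function.iterate_succ_apply' ..⟩

theorem disjoint_desc {x y : V} (hd : T.depth x = T.depth y) (hne : x ≠ y) :
    Disjoint (T.desc x) (T.desc y) := by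
  refine disjoint_left.2 fun w hx hy => hne ?_
  obtain ⟨k, hk, rfl⟩ := T.mem_desc.1 hx
  obtain ⟨l, hl, rfl⟩ := T.mem_desc.1 hy
  have := T.depth_iterate_parent_add w hk
  have := T.depth_iterate_parent_add w hl
  obtain rfl : k = l := by omega
  rfl

theorem subtreeCost_eq_add_sum_children (c : V → ℝ) (x : V) :
    T.subtreeCost c x = c x + ∑ y ∈ T.children x, T.subtreeCost c y := by
  have hx : x ∉ (T.children x).biUnion T.desc := fun h => by
    obtain ⟨y, hy, hxy⟩ := mem_biUnion.1 h
    have := T.depth_le_of_mem_desc hxy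
    have := T.depth_of_mem_children hy
    omega
  rw [subtreeCost, T.desc_eq_insert_biUnion, sum_insert hx, sum_biUnion]
  · rfl
  · exact fun y hy z hz => T.disjoint_desc
      (by rw [T.depth_of_mem_children hy, T.depth_of_mem_children hz])

theorem forestCost_eq_add_forestCost_succs (c : V → ℝ) (v : Finset V) :
    T.forestCost c v = ∑ x ∈ v, c x + T.forestCost c (T.succs v) := by
  have hdisj : (v : Set V).PairwiseDisjoint T.children := fun x _ y _ hne =>
    disjoint_left.2 fun w hx hy => hne <|
      (T.mem_children.1 hx).2.symm.trans (T.mem_children.1 hy).2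
  rw [forestCost, forestCost, succs, sum_biUnion hdisj, ← sum_add_distrib]
  exact sum_congr rfl fun x _ => T.subtreeCost_eq_add_sum_children c x

/-- The probability `P(w)` with which the SEI estimator descends from `v` to `w ∈ H(v)`. -/
noncomputable def hyperProb (r : V → ℝ) (v w : Finset V) : ℝ :=
  (∑ a ∈ w, r a) /
    ((∑ a ∈ T.succs v, r a) * ((((T.succs v).card - 1).choose (w.card - 1) : ℕ) : ℝ))

end

section Hyper

variable {T : FinRootedTree V} {B : ℕ} {v w : Finset V}

theorem subset_succs_of_mem_hyper (hw : w ∈ T.hyper B v) : w ⊆ T.succs v :=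
  (mem_powersetCard.1 hw).1

theorem card_of_mem_hyper (hw : w ∈ T.hyper B v) : w.card = min B (T.succs v).card :=
  (mem_powersetCard.1 hw).2

theorem nonempty_of_mem_hyper (hB : 1 ≤ B) (hS : T.succs v ≠ ∅) (hw : w ∈ T.hyper B v) :
    w.Nonempty := by
  have := card_pos.2 (nonempty_iff_ne_empty.2 hS)
  rw [← card_pos, card_of_mem_hyper hw]
  omega

theorem forall_le_add_depth_of_mem_hyper {m n : ℕ} (hv : ∀ x ∈ v, m ≤ n + 1 + T.depth x)
    (hw : w ∈ T.hyper B v) : ∀ y ∈ w, m ≤ n + T.depth y := fun y hy => by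
  obtain ⟨x, hx, hy⟩ := T.exists_depth_eq_of_mem_succs (subset_succs_of_mem_hyper hw hy)
  have := hv x hx
  omega

theorem sum_hyper_sum_div_choose (hB : 1 ≤ B) (hS : T.succs v ≠ ∅) (f : V → ℝ) :
    ∑ w ∈ T.hyper B v,
        (∑ a ∈ w, f a) / ((((T.succs v).card - 1).choose (w.card - 1) : ℕ) : ℝ) =
      ∑ a ∈ T.succs v, f a := by
  have hk : 1 ≤ min B (T.succs v).card := le_min hB (card_pos.2 (nonempty_iff_ne_empty.2 hS))
  have hC : ((((T.succs v).card - 1).choose (min B (T.succs v).card - 1) : ℕ) : ℝ) ≠ 0 :=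
    Nat.cast_ne_zero.2 (Nat.choose_pos (by omega)).ne'
  rw [sum_congr rfl fun w hw => by rw [card_of_mem_hyper hw], ← sum_div, hyper,
    sum_powersetCard_sum _ hk, nsmul_eq_mul, mul_div_cancel_left₀ _ hC]

theorem sum_hyper_forestCost_div_choose (hB : 1 ≤ B) (hS : T.succs v ≠ ∅) (c : V → ℝ) :
    ∑ w ∈ T.hyper B v,
        T.forestCost c w / ((((T.succs v).card - 1).choose (w.card - 1) : ℕ) : ℝ) =
      T.forestCost c (T.succs v) :=
  sum_hyper_sum_div_choose hB hS (T.subtreeCost c)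

theorem sum_hyperProb (hB : 1 ≤ B) {r : V → ℝ} (hr : ∀ x, 0 < r x) (hS : T.succs v ≠ ∅) :
    ∑ w ∈ T.hyper B v, T.hyperProb r v w = 1 := by
  have hR : ∑ a ∈ T.succs v, r a ≠ 0 :=
    (sum_pos (fun a _ => hr a) (nonempty_iff_ne_empty.2 hS)).ne'
  simp only [hyperProb, mul_comm (∑ a ∈ T.succs v, r a), ← div_div, ← sum_div,
    sum_hyper_sum_div_choose hB hS, div_self hR]

theorem hyperProb_mul_div (hB : 1 ≤ B) {r : V → ℝ} (hr : ∀ x, 0 < r x) (hS : T.succs v ≠ ∅)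
    (hw : w ∈ T.hyper B v) :
    T.hyperProb r v w * ((∑ a ∈ T.succs v, r a) / ∑ a ∈ w, r a) =
      1 / ((((T.succs v).card - 1).choose (w.card - 1) : ℕ) : ℝ) := by
  have hrS := sum_pos (fun a _ => hr a) (nonempty_iff_ne_empty.2 hS)
  have hrw := sum_pos (fun a _ => hr a) (nonempty_of_mem_hyper hB hS hw)
  rw [hyperProb]
  field_simp

end Hyper

section Estimator

variable {T : FinRootedTree V} {c : V → ℝ} {B : ℕ} {r : V → ℝ}

theorem seiE_succ (n : ℕ) (v : Finset V) (g : ℝ → ℝ) :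
    seiE T c B r (n + 1) v g =
      if T.succs v = ∅ then g ((∑ x ∈ v, c x) / (v.card : ℝ))
      else
        ∑ w ∈ T.hyper B v, T.hyperProb r v w *
          seiE T c B r n w fun y =>
            g ((∑ x ∈ v, c x) / (v.card : ℝ) +
              ((w.card : ℝ) / (v.card : ℝ)) * ((∑ a ∈ T.succs v, r a) / (∑ a ∈ w, r a)) * y) :=
  rfl

theorem seiE_add_mul (n : ℕ) (v : Finset V) (g h : ℝ → ℝ) (a : ℝ) :
    seiE T c B r n v (fun y => g y + a * h y) = seiE T c B r n v g + a * seiE T c B r n v h := by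
  induction n generalizing v g h with
  | zero => rfl
  | succ n ih =>
    simp only [seiE_succ]
    split_ifs
    · rfl
    · simp only [ih, mul_add, sum_add_distrib, mul_sum, mul_left_comm a]

theorem seiE_const (hB : 1 ≤ B) (hr : ∀ x, 0 < r x) (n : ℕ) (v : Finset V) (b : ℝ) :
    seiE T c B r n v (fun _ => b) = b := by
  induction n generalizing v with
  | zero => rfl
  | succ n ih =>
    rw [seiE_succ]
    split_ifs with hS
    · rfl
    · simp only [ih, ← sum_mul, sum_hyperProb hB hr hS, one_mul]

theorem seiE_affine (hB : 1 ≤ B) (hr : ∀ x, 0 < r x) (n : ℕ) (v : Finset V) (g : ℝ → ℝ)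
    (a b : ℝ) : seiE T c B r n v (fun y => a + b * g y) = a + b * seiE T c B r n v g := by
  rw [seiE_add_mul n v (fun _ => a), seiE_const hB hr]

theorem seiE_sq_affine (hB : 1 ≤ B) (hr : ∀ x, 0 < r x) (n : ℕ) (v : Finset V)
    (g : ℝ → ℝ) (a b : ℝ) :
    seiE T c B r n v (fun y => (a + b * g y) ^ 2) =
      a ^ 2 + 2 * a * b * seiE T c B r n v g + b ^ 2 * seiE T c B r n v (fun y => g y ^ 2) := by
  calc seiE T c B r n v (fun y => (a + b * g y) ^ 2)
      = seiE T c B r n v (fun y => (a ^ 2 + 2 * a * b * g y) + b ^ 2 * g y ^ 2) := by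
        congr 1
        funext y
        ring
    _ = _ := by rw [seiE_add_mul, seiE_affine hB hr]

/-- Every depth is below `Fintype.card V`, so the hypothesis says the fuel outlasts every path
down from `v`. -/
theorem seiE_succ_of_forall_le (n : ℕ) (v : Finset V) (g : ℝ → ℝ)
    (hv : ∀ x ∈ v, Fintype.card V ≤ n + T.depth x) :
    seiE T c B r (n + 1) v g = seiE T c B r n v g := by
  induction n generalizing v g with
  | zero =>
    obtain rfl := T.eq_empty_of_forall_card_le_depth (by simpa using hv)
    rfl
  | succ n ih =>
    rw [seiE_succ, seiE_succ (n := n)]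
    split_ifs
    · rfl
    · exact sum_congr rfl fun w hw =>
        congrArg _ (ih w _ (forall_le_add_depth_of_mem_hyper hv hw))

theorem seiE_succ_comp_card_mul (hS : T.succs v ≠ ∅) (n : ℕ) (h : ℝ → ℝ) :
    seiE T c B r (n + 1) v (fun y => h (v.card * y)) =
      ∑ w ∈ T.hyper B v, T.hyperProb r v w *
        seiE T c B r n w fun y =>
          h (∑ x ∈ v, c x + (∑ a ∈ T.succs v, r a) / (∑ a ∈ w, r a) * (w.card * y)) := by
  have hv : (v.card : ℝ) ≠ 0 := by
    refine Nat.cast_ne_zero.2 (card_ne_zero.2 (nonempty_iff_ne_empty.2 fun hv => hS ?_))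
    rw [hv, succs, biUnion_empty]
  rw [seiE_succ, if_neg hS]
  refine sum_congr rfl fun w _ => congrArg _ (congrArg _ (funext fun y => congrArg h ?_))
  field_simp

theorem seiE_card_mul_of_forall_le (hB : 1 ≤ B) (hr : ∀ x, 0 < r x) (n : ℕ) (v : Finset V)
    (hv : ∀ x ∈ v, Fintype.card V ≤ n + T.depth x) :
    seiE T c B r n v (fun y => v.card * y) = T.forestCost c v := by
  induction n generalizing v with
  | zero =>
    obtain rfl := T.eq_empty_of_forall_card_le_depth (by simpa using hv)
    simp [seiE, forestCost]
  | succ n ih =>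
    by_cases hS : T.succs v = ∅
    · rw [seiE_succ, if_pos hS, T.forestCost_eq_add_forestCost_succs, hS, forestCost,
        sum_empty, add_zero]
      rcases v.eq_empty_or_nonempty with rfl | hne
      · simp
      · field_simp
    have hterm : ∀ w ∈ T.hyper B v,
        T.hyperProb r v w * seiE T c B r n w (fun y =>
            ∑ x ∈ v, c x + (∑ a ∈ T.succs v, r a) / (∑ a ∈ w, r a) * (w.card * y)) =
          T.hyperProb r v w * ∑ x ∈ v, c x +
            T.forestCost c w / ((((T.succs v).card - 1).choose (w.card - 1) : ℕ) : ℝ) := by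
      intro w hw
      rw [seiE_affine hB hr, ih w (forall_le_add_depth_of_mem_hyper hv hw), mul_add,
        ← mul_assoc, hyperProb_mul_div hB hr hS hw, one_div_mul_eq_div]
    rw [seiE_succ_comp_card_mul hS n fun z => z, sum_congr rfl hterm, sum_add_distrib, ← sum_mul,
      sum_hyperProb hB hr hS, one_mul, sum_hyper_forestCost_div_choose hB hS,
      T.forestCost_eq_add_forestCost_succs c v]

theorem seiE_fintypeCard_card_mul (hB : 1 ≤ B) (hr : ∀ x, 0 < r x) (v : Finset V) :
    seiE T c B r (Fintype.card V) v (fun y => v.card * y) = T.forestCost c v :=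
  seiE_card_mul_of_forall_le hB hr _ v fun _ _ => Nat.le_add_right _ _

theorem seiE_fintypeCard_comp_card_mul (hS : T.succs v ≠ ∅) (h : ℝ → ℝ) :
    seiE T c B r (Fintype.card V) v (fun y => h (v.card * y)) =
      ∑ w ∈ T.hyper B v, T.hyperProb r v w *
        seiE T c B r (Fintype.card V) w fun y =>
          h (∑ x ∈ v, c x + (∑ a ∈ T.succs v, r a) / (∑ a ∈ w, r a) * (w.card * y)) := by
  obtain ⟨n, hn⟩ := Nat.exists_eq_succ_of_ne_zero (Fintype.card_pos_iff.2 ⟨T.root⟩).ne'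
  rw [hn, seiE_succ_comp_card_mul hS]
  exact sum_congr rfl fun w hw => congrArg _ (seiE_succ_of_forall_le n w _
    (forall_le_add_depth_of_mem_hyper (fun _ _ => by omega) hw)).symm

end Estimator

theorem sei_variance_general (T : FinRootedTree V) (c : V → ℝ)
    (B : ℕ) (hB : 1 ≤ B) (r : V → ℝ) (hr : ∀ x : V, 0 < r x)
    (v : Finset V) (hS : T.succs v ≠ ∅) :
    seiVar T c B r (Fintype.card V) v =
      (∑ w ∈ T.hyper B v,
        (1 / ((((T.succs v).card - 1).choose (w.card - 1) : ℕ) : ℝ)) *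
          ((∑ a ∈ T.succs v, r a) / (∑ a ∈ w, r a)) *
          (seiVar T c B r (Fintype.card V) w + T.forestCost c w ^ 2)) -
        T.forestCost c (T.succs v) ^ 2 := by
  have second_moment :
      seiE T c B r (Fintype.card V) v (fun y => (v.card * y) ^ 2) =
        ∑ w ∈ T.hyper B v, (T.hyperProb r v w * (∑ x ∈ v, c x) ^ 2 +
          2 * (∑ x ∈ v, c x) *
            (T.forestCost c w / ((((T.succs v).card - 1).choose (w.card - 1) : ℕ) : ℝ)) +
          (1 / ((((T.succs v).card - 1).choose (w.card - 1) : ℕ) : ℝ)) *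
            ((∑ a ∈ T.succs v, r a) / (∑ a ∈ w, r a)) *
            (seiVar T c B r (Fintype.card V) w + T.forestCost c w ^ 2)) := by
    rw [seiE_fintypeCard_comp_card_mul hS fun z => z ^ 2]
    refine sum_congr rfl fun w hw => ?_
    have hprob_mul_ratio := hyperProb_mul_div hB hr hS hw
    rw [seiE_sq_affine hB hr, seiVar, seiE_fintypeCard_card_mul hB hr]
    linear_combination (2 * (∑ x ∈ v, c x) * T.forestCost c w +
      (∑ a ∈ T.succs v, r a) / (∑ a ∈ w, r a) *
        seiE T c B r (Fintype.card V) w (fun y => (w.card * y) ^ 2)) * hprob_mul_ratio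
  rw [seiVar, second_moment, seiE_fintypeCard_card_mul hB hr,
    T.forestCost_eq_add_forestCost_succs c v, sum_add_distrib, sum_add_distrib, ← sum_mul,
    ← mul_sum, sum_hyperProb hB hr hS, sum_hyper_forestCost_div_choose hB hS]
  ring

/-- Paper's Theorem 4: the variance of the SEI estimate satisfies
`Var(|v|·C_SEI(T_v)) = ∑_{w ∈ H(v)} (1/C(|S(v)|-1,|w|-1)) · (r(S(v))/r(w)) ·
(Var(|w|·C_SEI(T_w)) + Cost(T_w)²) − Cost(T_{S(v)})²`. -/
theorem sei_variance (T : FinRootedTree V) (c : V → ℝ) (hc : ∀ x, 0 ≤ c x)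
    (B : ℕ) (hB : 1 ≤ B) (r : V → ℝ) (hr : ∀ x : V, 0 < r x)
    (v : Finset V) (hv : T.IsHypernode v) (hS : T.succs v ≠ ∅) :
    seiVar T c B r (Fintype.card V) v =
      (∑ w ∈ T.hyper B v,
        (1 / ((((T.succs v).card - 1).choose (w.card - 1) : ℕ) : ℝ)) *
          ((∑ a ∈ T.succs v, r a) / (∑ a ∈ w, r a)) *
          (seiVar T c B r (Fintype.card V) w + T.forestCost c w ^ 2)) -
        T.forestCost c (T.succs v) ^ 2 :=
  sei_variance_general T c B hB r hr v hS

end FinRootedTree
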